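/- Let P, Q : ℤ_2 → ℤ_2 be 1-Lipschitz functions satisfying, for all y ∈ ℤ_2: P(2y) = 1 + 2·P(y), P(1 + 2y) = 2·Q(y), Q(2y) = 2·P(y), and Q(1 + 2y) = 1 + 2·Q(y) (the standard automaton generators of the lamplighter group). Then the reduced van der Put coefficients of P satisfy b^P_0 = −1, b^P_1 = −4, b^P_2 = −3, b^P_3 = −1; for every n ≥ 0, b^P_n ∈ {−1, −3, −4} (as elements of ℤ_2); and the 2-kernel of the sequence n ↦ b^P_n contains at most 8 distinct sequences (in particular this sequence is 2-automatic). -/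

import Mathlib

/-- The van der Put coefficients of `f : ℤ_2 → ℤ_2`:
`B^f_n = f(n)` for `n < 2` and `B^f_n = f(n) - f(n mod 2^⌊log_2 n⌋)` for `n ≥ 2`. -/
noncomputable def vdpB2 (f : PadicInt 2 → PadicInt 2) (n : ℕ) : PadicInt 2 :=
  if n < 2 then f n else f n - f ((n % 2 ^ Nat.log 2 n : ℕ))

/-- The `2`-kernel of a sequence `a : ℕ → A`: all sequences `n ↦ a (j + n·2^i)` with
`i ≥ 0` and `0 ≤ j < 2^i`. -/
def twoKernel {A : Type*} (a : ℕ → A) : Set (ℕ → A) :=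
  {s | ∃ i j : ℕ, j < 2 ^ i ∧ s = fun n => a (j + n * 2 ^ i)}

/-! Both `P` and `Q` satisfy `f (r + 2 y) = c + 2 h_r y` with the same `h_0 = P` and `h_1 = Q`,
so for `m ≥ 1` the van der Put coefficient of either map at `2 m + r` is `2 (h_r m - h_r m_-)`.
Hence `B^P_n = B^Q_n` for `n ≥ 2` and `B^P_{2m+r} = 2 B^P_m` for `m ≥ 2`: for `n ≥ 2` the reduced
coefficient `b^P_n` only depends on the two leading binary digits of `n`, being `-3` for `10` and
`-1` for `11`. Every kernel sequence `n ↦ b^P (j + n 2^i)` with `i ≥ 1` therefore agrees with this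
digit function from `n = 2` on and is determined by its first two terms. -/

namespace Nat

theorem log_two_two_mul_add {m r : ℕ} (hm : m ≠ 0) (hr : r < 2) :
    Nat.log 2 (2 * m + r) = Nat.log 2 m + 1 := by
  rw [Nat.log_of_one_lt_of_le one_lt_two (by omega)]
  congr 2
  omega

theorem two_mul_add_mod_two_pow_log {m r : ℕ} (hm : m ≠ 0) (hr : r < 2) :
    (2 * m + r) % 2 ^ Nat.log 2 (2 * m + r) = 2 * (m % 2 ^ Nat.log 2 m) + r := by
  rw [log_two_two_mul_add hm hr, pow_succ', Nat.mod_mul, show (2 * m + r) / 2 = m by omega]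
  omega

end Nat

theorem vdpB2_of_two_le (f : ℤ_[2] → ℤ_[2]) {n : ℕ} (hn : 2 ≤ n) :
    vdpB2 f n = f n - f ((n % 2 ^ Nat.log 2 n : ℕ)) :=
  if_neg (by omega)

theorem vdpB2_two_mul_add {f h : ℤ_[2] → ℤ_[2]} {c : ℤ_[2]} {r : ℕ} (hr : r < 2)
    (hf : ∀ y, f (r + 2 * y) = c + 2 * h y) {m : ℕ} (hm : m ≠ 0) :
    vdpB2 f (2 * m + r) = 2 * (h m - h ((m % 2 ^ Nat.log 2 m : ℕ))) := by
  have hf' (k : ℕ) : f ((2 * k + r : ℕ)) = c + 2 * h k := by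
    rw [← hf]; push_cast; ring_nf
  rw [vdpB2_of_two_le f (by omega), Nat.two_mul_add_mod_two_pow_log hm hr, hf', hf']
  ring

/-- `-1` or `-3` according as the binary digit of `n` right after the leading one is `1` or `0`. -/
noncomputable def lamplighterCoeff (n : ℕ) : ℤ_[2] :=
  if n.testBit (Nat.log 2 n - 1) then -1 else -3

theorem lamplighterCoeff_mem (n : ℕ) : lamplighterCoeff n ∈ ({-1, -3} : Set ℤ_[2]) := by
  unfold lamplighterCoeff
  split <;> simp

theorem lamplighterCoeff_two_mul_add {m r : ℕ} (hm : 2 ≤ m) (hr : r < 2) :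
    lamplighterCoeff (2 * m + r) = lamplighterCoeff m := by
  have hlog : 1 ≤ Nat.log 2 m := Nat.le_log_of_pow_le one_lt_two (by simpa using hm)
  unfold lamplighterCoeff
  rw [Nat.log_two_two_mul_add (by omega) hr, Nat.add_sub_cancel,
    show Nat.log 2 m = Nat.log 2 m - 1 + 1 by omega, Nat.testBit_succ,
    show (2 * m + r) / 2 = m by omega, Nat.add_sub_cancel]

theorem lamplighterCoeff_add_mul_two_pow {i j n : ℕ} (hj : j < 2 ^ i) (hn : 2 ≤ n) :
    lamplighterCoeff (j + n * 2 ^ i) = lamplighterCoeff n := by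
  induction i generalizing j with
  | zero => simp_all
  | succ i ih =>
    have hsplit : j + n * 2 ^ (i + 1) = 2 * (j / 2 + n * 2 ^ i) + j % 2 := by
      rw [pow_succ, ← mul_assoc]; omega
    have hle : n ≤ n * 2 ^ i := Nat.le_mul_of_pos_right n (Nat.two_pow_pos i)
    rw [hsplit, lamplighterCoeff_two_mul_add (by omega) (Nat.mod_lt j two_pos),
      ih (by rw [pow_succ] at hj; omega)]

structure IsLamplighterPair (P Q : ℤ_[2] → ℤ_[2]) : Prop where
  P_two_mul : ∀ y, P (2 * y) = 1 + 2 * P y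
  P_one_add_two_mul : ∀ y, P (1 + 2 * y) = 2 * Q y
  Q_two_mul : ∀ y, Q (2 * y) = 2 * P y
  Q_one_add_two_mul : ∀ y, Q (1 + 2 * y) = 1 + 2 * Q y

namespace IsLamplighterPair

variable {P Q : ℤ_[2] → ℤ_[2]}

theorem P_zero (h : IsLamplighterPair P Q) : P 0 = -1 := by
  linear_combination -(by simpa using h.P_two_mul 0 : P 0 = 1 + 2 * P 0)

theorem Q_zero (h : IsLamplighterPair P Q) : Q 0 = -2 := by
  simpa [h.P_zero] using h.Q_two_mul 0

theorem P_one (h : IsLamplighterPair P Q) : P 1 = -4 := by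
  rw [show (1 : ℤ_[2]) = 1 + 2 * 0 by ring, h.P_one_add_two_mul, h.Q_zero]
  ring

theorem Q_one (h : IsLamplighterPair P Q) : Q 1 = -3 := by
  rw [show (1 : ℤ_[2]) = 1 + 2 * 0 by ring, h.Q_one_add_two_mul, h.Q_zero]
  ring

theorem vdpB2_eq (h : IsLamplighterPair P Q) {n : ℕ} (hn : 2 ≤ n) : vdpB2 P n = vdpB2 Q n := by
  obtain ⟨m, r, hr, rfl⟩ : ∃ m r, r < 2 ∧ n = 2 * m + r :=
    ⟨n / 2, n % 2, n.mod_lt two_pos, by omega⟩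
  have hm : m ≠ 0 := by omega
  obtain rfl | rfl : r = 0 ∨ r = 1 := by omega
  · rw [vdpB2_two_mul_add hr (by simpa using h.P_two_mul) hm,
      vdpB2_two_mul_add hr (c := 0) (by simpa using h.Q_two_mul) hm]
  · rw [vdpB2_two_mul_add hr (c := 0) (by simpa using h.P_one_add_two_mul) hm,
      vdpB2_two_mul_add hr (by simpa using h.Q_one_add_two_mul) hm]

theorem vdpB2_two_mul_add (h : IsLamplighterPair P Q) {m r : ℕ} (hm : 2 ≤ m) (hr : r < 2) :
    vdpB2 P (2 * m + r) = 2 * vdpB2 P m := by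
  obtain rfl | rfl : r = 0 ∨ r = 1 := by omega
  · rw [_root_.vdpB2_two_mul_add hr (by simpa using h.P_two_mul) (by omega),
      vdpB2_of_two_le P hm]
  · rw [_root_.vdpB2_two_mul_add hr (c := 0) (by simpa using h.P_one_add_two_mul) (by omega),
      h.vdpB2_eq hm, vdpB2_of_two_le Q hm]

theorem vdpB2_two_add (h : IsLamplighterPair P Q) {r : ℕ} (hr : r < 2) :
    vdpB2 P (2 + r) = 2 ^ Nat.log 2 (2 + r) * lamplighterCoeff (2 + r) := by
  obtain rfl | rfl : r = 0 ∨ r = 1 := by omega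
  · rw [show 2 + 0 = 2 * 1 + 0 by rfl,
      _root_.vdpB2_two_mul_add hr (by simpa using h.P_two_mul) one_ne_zero]
    norm_num [lamplighterCoeff, h.P_zero, h.P_one]
  · rw [show 2 + 1 = 2 * 1 + 1 by rfl,
      _root_.vdpB2_two_mul_add hr (c := 0) (by simpa using h.P_one_add_two_mul) one_ne_zero]
    norm_num [lamplighterCoeff, h.Q_zero, h.Q_one]

theorem vdpB2_eq_two_pow_mul (h : IsLamplighterPair P Q) {n : ℕ} (hn : 2 ≤ n) :
    vdpB2 P n = 2 ^ Nat.log 2 n * lamplighterCoeff n := by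
  induction n using Nat.strong_induction_on with
  | _ n ih =>
    obtain ⟨m, r, hr, rfl⟩ : ∃ m r, r < 2 ∧ n = 2 * m + r :=
      ⟨n / 2, n % 2, n.mod_lt two_pos, by omega⟩
    obtain rfl | hm : m = 1 ∨ 2 ≤ m := by omega
    · exact h.vdpB2_two_add hr
    · rw [h.vdpB2_two_mul_add hm hr, ih m (by omega) hm, Nat.log_two_two_mul_add (by omega) hr,
        lamplighterCoeff_two_mul_add hm hr, pow_succ]
      ring

end IsLamplighterPair

section TwoKernel

variable {A : Type*}

def sequencesWithTail (g : ℕ → A) (S T : Set A) : Set (ℕ → A) :=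
  {s | s 0 ∈ S ∧ s 1 ∈ T ∧ ∀ n, 2 ≤ n → s n = g n}

theorem injOn_sequencesWithTail (g : ℕ → A) (S T : Set A) :
    Set.InjOn (fun s : ℕ → A => (s 0, s 1)) (sequencesWithTail g S T) := by
  rintro s ⟨-, -, hs⟩ t ⟨-, -, ht⟩ hst
  simp only [Prod.mk.injEq] at hst
  funext n
  match n with
  | 0 => exact hst.1
  | 1 => exact hst.2
  | n + 2 => rw [hs _ (by omega), ht _ (by omega)]

theorem mapsTo_sequencesWithTail (g : ℕ → A) (S T : Set A) :
    Set.MapsTo (fun s : ℕ → A => (s 0, s 1)) (sequencesWithTail g S T) (S ×ˢ T) :=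
  fun _ hs => ⟨hs.1, hs.2.1⟩

theorem finite_sequencesWithTail (g : ℕ → A) {S T : Set A} (hS : S.Finite) (hT : T.Finite) :
    (sequencesWithTail g S T).Finite :=
  (hS.prod hT).of_injOn (mapsTo_sequencesWithTail g S T) (injOn_sequencesWithTail g S T)

theorem ncard_sequencesWithTail_le (g : ℕ → A) {S T : Set A} (hS : S.Finite) (hT : T.Finite) :
    (sequencesWithTail g S T).ncard ≤ S.ncard * T.ncard :=
  Set.ncard_prod (s := S) (t := T) ▸ Set.ncard_le_ncard_of_injOn _
    (mapsTo_sequencesWithTail g S T) (injOn_sequencesWithTail g S T) (hS.prod hT)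

theorem twoKernel_subset {a g : ℕ → A} {S T : Set A} (hag : ∀ n, 2 ≤ n → a n = g n)
    (hg : ∀ {i j n : ℕ}, j < 2 ^ i → 2 ≤ n → g (j + n * 2 ^ i) = g n)
    (haS : ∀ n, a n ∈ S) (hgT : ∀ n, g n ∈ T) :
    twoKernel a ⊆ insert a (sequencesWithTail g S T) := by
  rintro s ⟨i, j, hj, rfl⟩
  obtain rfl | hi := Nat.eq_zero_or_pos i
  · obtain rfl : j = 0 := by simpa using hj
    left
    simp
  · have h2i : 2 ≤ 2 ^ i := Nat.le_self_pow hi.ne' 2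
    right
    refine ⟨haS _, ?_, fun n hn => ?_⟩
    · simpa only [hag _ (by omega : 2 ≤ j + 1 * 2 ^ i)] using hgT _
    · simp only [hag _ (by nlinarith : 2 ≤ j + n * 2 ^ i), hg hj hn]

theorem finite_twoKernel_and_ncard_le {a g : ℕ → A} {S T : Set A} (hag : ∀ n, 2 ≤ n → a n = g n)
    (hg : ∀ {i j n : ℕ}, j < 2 ^ i → 2 ≤ n → g (j + n * 2 ^ i) = g n)
    (haS : ∀ n, a n ∈ S) (hgT : ∀ n, g n ∈ T) (hS : S.Finite) (hT : T.Finite) :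
    (twoKernel a).Finite ∧ (twoKernel a).ncard ≤ S.ncard * T.ncard + 1 := by
  have hK := twoKernel_subset hag hg haS hgT
  have hfin := (finite_sequencesWithTail g hS hT).insert a
  refine ⟨hfin.subset hK, ?_⟩
  calc (twoKernel a).ncard
      ≤ (sequencesWithTail g S T).ncard + 1 :=
        (Set.ncard_le_ncard hK hfin).trans (Set.ncard_insert_le _ _)
    _ ≤ S.ncard * T.ncard + 1 := by
        gcongr
        exact ncard_sequencesWithTail_le g hS hT

end TwoKernel

theorem lamplighter_reduced_vanDerPut_general (P Q : PadicInt 2 → PadicInt 2)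
    (hP0 : ∀ y : PadicInt 2, P (2 * y) = 1 + 2 * P y)
    (hP1 : ∀ y : PadicInt 2, P (1 + 2 * y) = 2 * Q y)
    (hQ0 : ∀ y : PadicInt 2, Q (2 * y) = 2 * P y)
    (hQ1 : ∀ y : PadicInt 2, Q (1 + 2 * y) = 1 + 2 * Q y)
    -- `bP` is the sequence of reduced van der Put coefficients of `P`
    (bP : ℕ → PadicInt 2)
    (hbP : ∀ n : ℕ, (2 : PadicInt 2) ^ Nat.log 2 n * bP n = vdpB2 P n) :
    bP 0 = -1 ∧ bP 1 = -4 ∧ bP 2 = -3 ∧ bP 3 = -1 ∧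
    (∀ n : ℕ, bP n ∈ ({-1, -3, -4} : Set (PadicInt 2))) ∧
    (twoKernel bP).Finite ∧ (twoKernel bP).ncard ≤ 8 := by
  have h : IsLamplighterPair P Q := ⟨hP0, hP1, hQ0, hQ1⟩
  have hb : ∀ n, 2 ≤ n → bP n = lamplighterCoeff n := fun n hn =>
    mul_left_cancel₀ (pow_ne_zero _ two_ne_zero) ((hbP n).trans (h.vdpB2_eq_two_pow_mul hn))
  have hb0 : bP 0 = -1 := by simpa [vdpB2, h.P_zero] using hbP 0
  have hb1 : bP 1 = -4 := by simpa [vdpB2, h.P_one] using hbP 1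
  have hmem : ∀ n, bP n ∈ ({-1, -3, -4} : Set ℤ_[2])
    | 0 => by simp [hb0]
    | 1 => by simp [hb1]
    | n + 2 => by
      rw [hb _ (by omega)]
      exact Set.insert_subset_insert (by simp) (lamplighterCoeff_mem _)
  obtain ⟨hfin, hcard⟩ := finite_twoKernel_and_ncard_le hb lamplighterCoeff_add_mul_two_pow hmem
    lamplighterCoeff_mem (Set.toFinite _) (Set.toFinite _)
  refine ⟨hb0, hb1, ?_, ?_, hmem, hfin, hcard.trans ?_⟩
  · rw [hb 2 le_rfl]; norm_num [lamplighterCoeff]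
  · rw [hb 3 (by norm_num)]; norm_num [lamplighterCoeff]
  · rw [Set.ncard_pair (by norm_num),
      Set.ncard_eq_three.2 ⟨-1, -3, -4, by norm_num, by norm_num, by norm_num, rfl⟩]
    norm_num

/-- For the 1-Lipschitz maps `P, Q : ℤ_2 → ℤ_2` given by the standard lamplighter wreath
recursion `P = (P, Q)(01)`, `Q = (P, Q)`, the reduced van der Put coefficients of `P`
start with `-1, -4, -3, -1`, all lie in `{-1, -3, -4}`, and the `2`-kernel of their
sequence has at most `8` elements (so the sequence is `2`-automatic). -/
theorem lamplighter_reduced_vanDerPut (P Q : PadicInt 2 → PadicInt 2)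
    (hP : ∀ x y : PadicInt 2, ‖P x - P y‖ ≤ ‖x - y‖)
    (hQ : ∀ x y : PadicInt 2, ‖Q x - Q y‖ ≤ ‖x - y‖)
    (hP0 : ∀ y : PadicInt 2, P (2 * y) = 1 + 2 * P y)
    (hP1 : ∀ y : PadicInt 2, P (1 + 2 * y) = 2 * Q y)
    (hQ0 : ∀ y : PadicInt 2, Q (2 * y) = 2 * P y)
    (hQ1 : ∀ y : PadicInt 2, Q (1 + 2 * y) = 1 + 2 * Q y)
    -- `bP` is the sequence of reduced van der Put coefficients of `P`
    (bP : ℕ → PadicInt 2)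
    (hbP : ∀ n : ℕ, (2 : PadicInt 2) ^ Nat.log 2 n * bP n = vdpB2 P n) :
    bP 0 = -1 ∧ bP 1 = -4 ∧ bP 2 = -3 ∧ bP 3 = -1 ∧
    (∀ n : ℕ, bP n ∈ ({-1, -3, -4} : Set (PadicInt 2))) ∧
    (twoKernel bP).Finite ∧ (twoKernel bP).ncard ≤ 8 :=
  lamplighter_reduced_vanDerPut_general P Q hP0 hP1 hQ0 hQ1 bP hbP
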